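/- Given a distributive law l : T ∘ S ⟶ S ∘ T between monads S and T on a category C (satisfying Beck's four axioms), the composite endofunctor S ∘ T carries a monad structure with unit η_S ∘ η_T and multiplication (μ_S ∘ μ_T) composed with S l T. -/
import Mathlib


open CategoryTheory

universe v u

variable {C : Type u} [Category.{v} C]

/-- The unit of the composite monad `S ∘ T`, i.e. the horizontal composite `η_S η_T`. -/
def compUnit (S T : CategoryTheory.Monad C) (X : C) : X ⟶ S.obj (T.obj X) :=
  S.η.app X ≫ S.map (T.η.app X)

/-- The multiplication of the composite monad `S ∘ T` induced by a distributive law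
`l : T ∘ S ⟶ S ∘ T`, namely `(μ_S μ_T) ∘ (S l T)`. -/
def compMul (S T : CategoryTheory.Monad C)
    (l : S.toFunctor ⋙ T.toFunctor ⟶ T.toFunctor ⋙ S.toFunctor) (X : C) :
    S.obj (T.obj (S.obj (T.obj X))) ⟶ S.obj (T.obj X) :=
  S.map (l.app (T.obj X)) ≫ S.map (S.map (T.μ.app X)) ≫ S.μ.app (T.obj X)

/-- Beck's theorem: given a distributive law `l : T ∘ S ⟶ S ∘ T` (with components
`l_X : T (S X) ⟶ S (T X)`) satisfying Beck's four axioms, the composite endofunctor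
`S ∘ T` carries a monad structure with unit `η_S η_T` and multiplication
`(μ_S μ_T) ∘ (S l T)`: the unit and multiplication are natural and satisfy the
monad laws. -/
theorem composite_monad_of_distributive_law (S T : CategoryTheory.Monad C)
    (l : S.toFunctor ⋙ T.toFunctor ⟶ T.toFunctor ⋙ S.toFunctor)
    (beck_unit_T : ∀ X : C, T.η.app (S.obj X) ≫ l.app X = S.map (T.η.app X))
    (beck_unit_S : ∀ X : C, T.map (S.η.app X) ≫ l.app X = S.η.app (T.obj X))
    (beck_mul_T : ∀ X : C, T.μ.app (S.obj X) ≫ l.app X =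
      T.map (l.app X) ≫ l.app (T.obj X) ≫ S.map (T.μ.app X))
    (beck_mul_S : ∀ X : C, T.map (S.μ.app X) ≫ l.app X =
      l.app (S.obj X) ≫ S.map (l.app X) ≫ S.μ.app (T.obj X)) :
    (∀ {X Y : C} (f : X ⟶ Y), f ≫ compUnit S T Y = compUnit S T X ≫ S.map (T.map f)) ∧
    (∀ {X Y : C} (f : X ⟶ Y),
      S.map (T.map (S.map (T.map f))) ≫ compMul S T l Y =
        compMul S T l X ≫ S.map (T.map f)) ∧
    (∀ X : C, compUnit S T (S.obj (T.obj X)) ≫ compMul S T l X = 𝟙 (S.obj (T.obj X))) ∧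
    (∀ X : C, S.map (T.map (compUnit S T X)) ≫ compMul S T l X = 𝟙 (S.obj (T.obj X))) ∧
    (∀ X : C, S.map (T.map (compMul S T l X)) ≫ compMul S T l X =
      compMul S T l (S.obj (T.obj X)) ≫ compMul S T l X) := by
  have lnat : ∀ {A B : C} (f : A ⟶ B),
      T.map (S.map f) ≫ l.app B = l.app A ≫ S.map (T.map f) := fun f => by
    simpa using l.naturality f
  have μSnat : ∀ {A B : C} (f : A ⟶ B),
      S.map (S.map f) ≫ S.μ.app B = S.μ.app A ≫ S.map f := fun f => by
    simpa using S.μ.naturality f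
  have μTnat : ∀ {A B : C} (f : A ⟶ B),
      T.map (T.map f) ≫ T.μ.app B = T.μ.app A ≫ T.map f := fun f => by
    simpa using T.μ.naturality f
  have ηSnat : ∀ {A B : C} (f : A ⟶ B),
      f ≫ S.η.app B = S.η.app A ≫ S.map f := fun f => by
    simpa using S.η.naturality f
  have μSnat2 : ∀ {A B : C} (f : A ⟶ B) {Z : C} (g : S.obj B ⟶ Z),
      S.map (S.map f) ≫ S.μ.app B ≫ g = S.μ.app A ≫ S.map f ≫ g := by
    intro A B f Z g
    rw [← Category.assoc, μSnat, Category.assoc]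
  refine ⟨?_, ?_, ?_, ?_, ?_⟩
  · intro X Y f
    dsimp [compUnit]
    rw [← Category.assoc, ηSnat f, Category.assoc, ← S.map_comp]
    have h : f ≫ T.η.app Y = T.η.app X ≫ T.map f := by simpa using T.η.naturality f
    rw [h, S.map_comp, Category.assoc]
  · intro X Y f
    dsimp [compMul]
    rw [← S.map_comp_assoc, lnat (T.map f), S.map_comp_assoc]
    rw [← S.map_comp_assoc (S.map (T.map (T.map f))), ← S.map_comp, μTnat f,
      S.map_comp, S.map_comp_assoc]
    rw [Category.assoc, μSnat (T.map f)]
    simp only [Category.assoc]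
  · intro X
    dsimp [compUnit, compMul]
    rw [Category.assoc, ← S.map_comp_assoc (T.η.app (S.obj (T.obj X))) (l.app (T.obj X)),
      beck_unit_T (T.obj X)]
    rw [← S.map_comp_assoc, ← S.map_comp, T.left_unit]
    simp
  · intro X
    dsimp [compUnit, compMul]
    have h : T.map (S.η.app X ≫ S.map (T.η.app X)) ≫ l.app (T.obj X) ≫ S.map (T.μ.app X)
        = S.η.app (T.obj X) := by
      rw [T.map_comp, Category.assoc, ← Category.assoc (T.map (S.map (T.η.app X))),
        lnat (T.η.app X)]
      simp only [Functor.id_obj, Category.assoc]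
      rw [← S.map_comp, T.right_unit]
      simp [beck_unit_S X]
    rw [← S.map_comp_assoc, ← S.map_comp_assoc, Category.assoc, h]
    exact S.right_unit (T.obj X)
  · intro X
    dsimp [compMul]
    simp only [Functor.comp_obj, Functor.map_comp, Category.assoc]
    -- LHS normalization
    -- step A : beck_mul_S at T X
    rw [← S.map_comp_assoc (T.map (S.μ.app (T.obj X))), beck_mul_S (T.obj X)]
    simp only [Functor.comp_obj, Functor.map_comp, Category.assoc]
    -- step B : naturality of l at S.map (T.μ.app X)
    rw [← S.map_comp_assoc (T.map (S.map (S.map (T.μ.app X)))),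
      lnat (A := S.obj (T.obj (T.obj X))) (B := S.obj (T.obj X)) (S.map (T.μ.app X))]
    simp only [Functor.comp_obj, Functor.map_comp, Category.assoc]
    -- step C : naturality of l at T.μ.app X
    rw [← S.map_comp_assoc (S.map (T.map (S.map (T.μ.app X)))), ← S.map_comp,
      lnat (A := T.obj (T.obj X)) (B := T.obj X) (T.μ.app X)]
    simp only [Functor.comp_obj, Functor.map_comp, Category.assoc]
    -- step D : naturality of μ_S at T.map (T.μ.app X)
    rw [← S.map_comp_assoc (S.map (S.map (T.map (T.μ.app X)))),
      μSnat (A := T.obj (T.obj (T.obj X))) (B := T.obj (T.obj X)) (T.map (T.μ.app X))]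
    simp only [Functor.comp_obj, Functor.map_comp, Category.assoc]
    -- step E : associativity of μ_T
    rw [← S.map_comp_assoc (S.map (T.map (T.μ.app X))), ← S.map_comp, T.assoc]
    simp only [Functor.comp_obj, Functor.map_comp, Category.assoc]
    -- step F : naturality of l at l.app (T.obj X)
    rw [← S.map_comp_assoc (T.map (S.map (l.app (T.obj X)))),
      lnat (A := T.obj (S.obj (T.obj X))) (B := S.obj (T.obj (T.obj X))) (l.app (T.obj X))]
    simp only [Functor.comp_obj, Functor.map_comp, Category.assoc]
    -- step G : push μ_S left in the tail of the LHS, then μ_S associativity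
    rw [μSnat (A := T.obj (T.obj X)) (B := T.obj X) (T.μ.app X)]
    rw [μSnat2 (A := T.obj (T.obj (T.obj X))) (B := T.obj (T.obj X)) (T.μ.app (T.obj X))]
    rw [← Category.assoc (S.map (S.μ.app (T.obj (T.obj (T.obj X)))))
      (S.μ.app (T.obj (T.obj (T.obj X)))), S.assoc]
    simp only [Functor.comp_obj, Category.assoc]
    -- RHS : naturality of μ_S at l.app (T.obj X)
    rw [← μSnat2 (A := T.obj (S.obj (T.obj X))) (B := S.obj (T.obj (T.obj X)))
      (l.app (T.obj X))]
    -- RHS : beck_mul_T at T X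
    rw [← S.map_comp_assoc (S.map (T.μ.app (S.obj (T.obj X)))) (S.map (l.app (T.obj X))),
      ← S.map_comp (T.μ.app (S.obj (T.obj X))) (l.app (T.obj X)), beck_mul_T (T.obj X)]
    simp only [Functor.comp_obj, Functor.map_comp, Category.assoc]
    -- RHS : naturality of μ_S at S.map (T.μ.app (T.obj X))
    rw [μSnat2 (A := S.obj (T.obj (T.obj (T.obj X)))) (B := S.obj (T.obj (T.obj X)))
      (S.map (T.μ.app (T.obj X)))]
    -- RHS : naturality of μ_S at T.μ.app (T.obj X)
    rw [μSnat2 (A := T.obj (T.obj (T.obj X))) (B := T.obj (T.obj X)) (T.μ.app (T.obj X))]
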